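/- arXiv:2210.16178 — 3 statements merged into one kernel-verified Lean document; each statement's English description precedes it below -/
import Mathlib

section
/- The real Lie algebra spanned by four elements e, f, h₁, h₂ satisfying [h₁,h₂]=0, [h₁,e]=e, [h₂,e]=je, [h₁,f]=-f, [h₂,f]=-jf, [e,f]=-(jh₁+h₂), for a fixed integer j with j ≠ -1 (e.g. j ≥ 1), is isomorphic to gl₂(ℝ). -/
attribute [local instance 100] LieRing.ofAssociativeRing

set_option maxHeartbeats 1000000 in
/-- A real Lie algebra spanned by linearly independent elements e, f, h₁, h₂ satisfying
the relations [h₁,h₂]=0, [h₁,e]=e, [h₂,e]=je, [h₁,f]=-f, [h₂,f]=-jf,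
[e,f]=-(jh₁+h₂) for a fixed integer j ≥ 1 is isomorphic to gl₂(ℝ). -/
theorem stmt_6 (L : Type*) [LieRing L] [LieAlgebra ℝ L]
    (e f h₁ h₂ : L) (j : ℤ) (hj : 1 ≤ j)
    (hind : LinearIndependent ℝ ![e, f, h₁, h₂])
    (hspan : Submodule.span ℝ ({e, f, h₁, h₂} : Set L) = ⊤)
    (h12 : ⁅h₁, h₂⁆ = 0)
    (h1e : ⁅h₁, e⁆ = e) (h2e : ⁅h₂, e⁆ = (j : ℝ) • e)
    (h1f : ⁅h₁, f⁆ = -f) (h2f : ⁅h₂, f⁆ = -((j : ℝ) • f))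
    (hef : ⁅e, f⁆ = -((j : ℝ) • h₁ + h₂)) :
    Nonempty (L ≃ₗ⁅ℝ⁆ Matrix (Fin 2) (Fin 2) ℝ) := by
  have hj0 : (j : ℝ) ≠ 0 := by
    have : (0:ℝ) < j := by exact_mod_cast lt_of_lt_of_le one_pos hj
    exact ne_of_gt this
  have hrange : Set.range ![e, f, h₁, h₂] = ({e, f, h₁, h₂} : Set L) := by
    ext x
    constructor
    · rintro (h|h|h|h) <;> simp_all [Set.mem_insert_iff]
    · intro h; simp only [Set.mem_insert_iff, Set.mem_singleton_iff] at h
      rcases h with h|h|h|h <;> [exact ⟨0, h.symm⟩; exact ⟨1, h.symm⟩; exact ⟨2, h.symm⟩; exact ⟨3, h.symm⟩]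
  have hspan' : ⊤ ≤ Submodule.span ℝ (Set.range ![e, f, h₁, h₂]) := by
    rw [hrange, hspan]
  let b : Module.Basis (Fin 4) ℝ L := Module.Basis.mk hind hspan'
  let M : Fin 4 → Matrix (Fin 2) (Fin 2) ℝ :=
    ![!![0,1;0,0], !![0,0;-(j:ℝ),0], !![1,0;0,0], !![0,0;0,-(j:ℝ)]]
  let φ : L →ₗ[ℝ] Matrix (Fin 2) (Fin 2) ℝ := b.constr ℝ M
  have hb : ∀ i, b i = ![e, f, h₁, h₂] i := fun i => Module.Basis.mk_apply hind hspan' i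
  have hφ : ∀ i, φ (![e, f, h₁, h₂] i) = M i := by
    intro i
    rw [← hb i]
    exact b.constr_basis ℝ M i
  have hφe : φ e = M 0 := hφ 0
  have hφf : φ f = M 1 := hφ 1
  have hφh₁ : φ h₁ = M 2 := hφ 2
  have hφh₂ : φ h₂ = M 3 := hφ 3
  -- the two bilinear maps
  let B1 : L →ₗ[ℝ] L →ₗ[ℝ] Matrix (Fin 2) (Fin 2) ℝ :=
    LinearMap.mk₂ ℝ (fun x y => φ ⁅x, y⁆)
      (fun x x' y => by simp [add_lie])
      (fun c x y => by simp [smul_lie])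
      (fun x y y' => by simp [lie_add])
      (fun c x y => by simp [lie_smul])
  let B2 : L →ₗ[ℝ] L →ₗ[ℝ] Matrix (Fin 2) (Fin 2) ℝ :=
    LinearMap.mk₂ ℝ (fun x y => ⁅φ x, φ y⁆)
      (fun x x' y => by simp [add_lie])
      (fun c x y => by simp)
      (fun x y y' => by simp [lie_add])
      (fun c x y => by simp)
  have hfe : ⁅f, e⁆ = (j : ℝ) • h₁ + h₂ := by rw [← lie_skew, hef, neg_neg]
  have he1 : ⁅e, h₁⁆ = -e := by rw [← lie_skew, h1e]
  have he2 : ⁅e, h₂⁆ = -((j : ℝ) • e) := by rw [← lie_skew, h2e]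
  have hf1 : ⁅f, h₁⁆ = f := by rw [← lie_skew, h1f, neg_neg]
  have hf2 : ⁅f, h₂⁆ = (j : ℝ) • f := by rw [← lie_skew, h2f, neg_neg]
  have h21 : ⁅h₂, h₁⁆ = 0 := by rw [← lie_skew, h12, neg_zero]
  have hB : B1 = B2 := by
    apply b.ext fun i => b.ext fun k => ?_
    rw [hb i, hb k]
    fin_cases i <;> fin_cases k <;>
      · simp only [B1, B2, LinearMap.mk₂_apply]
        norm_num [M, lie_self, h12, h21, h1e, h2e, h1f, h2f, hef, hfe, he1, he2, hf1, hf2,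
          hφe, hφf, hφh₁, hφh₂, Ring.lie_def]
        try · ext a c
              fin_cases a <;> fin_cases c <;>
                simp [Matrix.mul_apply, Fin.sum_univ_two]
  have hmaplie : ∀ x y : L, φ ⁅x, y⁆ = ⁅φ x, φ y⁆ := fun x y =>
    LinearMap.congr_fun (LinearMap.congr_fun hB x) y
  -- inverse linear map
  let mb : Module.Basis (Fin 2 × Fin 2) ℝ (Matrix (Fin 2) (Fin 2) ℝ) := Matrix.stdBasis ℝ (Fin 2) (Fin 2)
  let w : Fin 2 × Fin 2 → L := fun p =>
    ![![h₁, e], ![(-(j:ℝ))⁻¹ • f, (-(j:ℝ))⁻¹ • h₂]] p.1 p.2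
  let ψ : Matrix (Fin 2) (Fin 2) ℝ →ₗ[ℝ] L := mb.constr ℝ w
  have hjneg : (-(j:ℝ)) ≠ 0 := neg_ne_zero.mpr hj0
  have hψ : ∀ p : Fin 2 × Fin 2, ψ (mb p) = w p := fun p => mb.constr_basis ℝ w p
  have hmb : ∀ p : Fin 2 × Fin 2, mb p = Matrix.single p.1 p.2 1 := fun p => by
    simpa [mb] using Matrix.stdBasis_eq_single ℝ p.1 p.2
  have hm0 : M 0 = mb (0, 1) := by
    rw [hmb]; ext a c; fin_cases a <;> fin_cases c <;> simp [M, Matrix.single]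
  have hm1 : M 1 = (-(j:ℝ)) • mb (1, 0) := by
    rw [hmb]; ext a c; fin_cases a <;> fin_cases c <;> simp [M, Matrix.single]
  have hm2 : M 2 = mb (0, 0) := by
    rw [hmb]; ext a c; fin_cases a <;> fin_cases c <;> simp [M, Matrix.single]
  have hm3 : M 3 = (-(j:ℝ)) • mb (1, 1) := by
    rw [hmb]; ext a c; fin_cases a <;> fin_cases c <;> simp [M, Matrix.single]
  have hinv : ∀ c : ℝ, c ≠ 0 → ∀ x : L, c • c⁻¹ • x = x := fun c hc x => by
    rw [smul_smul, mul_inv_cancel₀ hc, one_smul]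
  have hψφ : Function.LeftInverse ψ φ := by
    have : ψ.comp φ = LinearMap.id := by
      apply b.ext fun i => ?_
      rw [hb i]
      fin_cases i
      · show ψ (φ e) = e
        rw [hφe, hm0, hψ]; rfl
      · show ψ (φ f) = f
        rw [hφf, hm1, map_smul, hψ]
        exact hinv _ hjneg f
      · show ψ (φ h₁) = h₁
        rw [hφh₁, hm2, hψ]; rfl
      · show ψ (φ h₂) = h₂
        rw [hφh₂, hm3, map_smul, hψ]
        exact hinv _ hjneg h₂
    exact fun x => LinearMap.congr_fun this x
  have hφψ : Function.RightInverse ψ φ := by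
    have : φ.comp ψ = LinearMap.id := by
      apply mb.ext fun p => ?_
      have := hψ p
      rcases p with ⟨a, c⟩
      fin_cases a <;> fin_cases c
      · show φ (ψ (mb (0,0))) = mb (0,0)
        rw [hψ]; show φ h₁ = _; rw [hφh₁, hm2]
      · show φ (ψ (mb (0,1))) = mb (0,1)
        rw [hψ]; show φ e = _; rw [hφe, hm0]
      · show φ (ψ (mb (1,0))) = mb (1,0)
        rw [hψ]; show φ ((-(j:ℝ))⁻¹ • f) = _
        rw [map_smul, hφf, hm1, smul_smul, inv_mul_cancel₀ hjneg, one_smul]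
      · show φ (ψ (mb (1,1))) = mb (1,1)
        rw [hψ]; show φ ((-(j:ℝ))⁻¹ • h₂) = _
        rw [map_smul, hφh₂, hm3, smul_smul, inv_mul_cancel₀ hjneg, one_smul]
    exact fun x => LinearMap.congr_fun this x
  exact ⟨{ toLinearMap := φ, map_lie' := hmaplie _ _, invFun := ψ,
           left_inv := hψφ, right_inv := hφψ }⟩
end

section
/- Euler's pentagonal number identity: as formal power series, ∏_{j=1}^∞ (1 - q^j) = 1 + Σ_{j=1}^∞ (-1)^j (q^{j(3j+1)/2} + q^{j(3j-1)/2}). -/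
open PowerSeries Finset

private lemma pent_half (j : ℕ) : j * (j + 1) / 2 = j + j * (j - 1) / 2 := by
  have h : j * (j + 1) = 2 * j + j * (j - 1) := by
    cases j with
    | zero => rfl
    | succ k => simp [Nat.succ_sub_one]; ring
  rw [h, Nat.mul_add_div (by norm_num)]

private lemma pent1 (j : ℕ) : j * (3 * j + 1) / 2 = j * j + j + j * (j - 1) / 2 := by
  have h : j * (3 * j + 1) = 2 * (j * j + j) + j * (j - 1) := by
    cases j with
    | zero => rfl
    | succ k => simp [Nat.succ_sub_one]; ring
  rw [h, Nat.mul_add_div (by norm_num)]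

private lemma pent2 (j : ℕ) : j * (3 * j - 1) / 2 = j * j + j * (j - 1) / 2 := by
  have h : j * (3 * j - 1) = 2 * (j * j) + j * (j - 1) := by
    cases j with
    | zero => rfl
    | succ k =>
      have h1 : 3 * (k + 1) - 1 = 3 * k + 2 := by omega
      have h2 : k + 1 - 1 = k := by omega
      rw [h1, h2]; ring
  rw [h, Nat.mul_add_div (by norm_num)]

/-- The `j`-th term of Shanks' finite form of the pentagonal identity. -/
private noncomputable def gg (n j : ℕ) : PowerSeries ℤ :=
  (-1) ^ j * (∏ i ∈ Icc (j + 1) n, (1 - (X : PowerSeries ℤ) ^ i)) * X ^ (j * (j + 1) / 2 + j * n)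

/-- The telescoping auxiliary series. -/
private noncomputable def vv (n j : ℕ) : PowerSeries ℤ :=
  (-1) ^ j * (∏ i ∈ Icc j n, (1 - (X : PowerSeries ℤ) ^ i)) * X ^ (j * (n + 1) + j * (j - 1) / 2)

private lemma vv_zero (n : ℕ) : vv n 0 = 0 := by
  unfold vv
  rw [Finset.prod_eq_zero (Finset.mem_Icc.2 ⟨le_refl 0, Nat.zero_le n⟩)] <;> simp

private lemma key (n j : ℕ) (h : j ≤ n) :
    gg (n + 1) j - gg n j = vv n (j + 1) - vv n j := by
  unfold gg vv
  rw [Finset.prod_Icc_succ_top (by omega : j + 1 ≤ n + 1),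
    Finset.Icc_eq_cons_Ioc h, Finset.prod_cons, ← Finset.Icc_add_one_left_eq_Ioc]
  have e1 : j * (j + 1) / 2 + j * (n + 1) = j * (j - 1) / 2 + (j * n + 2 * j) := by
    rw [pent_half]; ring
  have e2 : j * (j + 1) / 2 + j * n = j * (j - 1) / 2 + (j * n + j) := by
    rw [pent_half]; ring
  have e3 : (j + 1) * (n + 1) + (j + 1) * (j + 1 - 1) / 2
      = j * (j - 1) / 2 + (j * n + 2 * j + (n + 1)) := by
    have h5 : (j + 1) * (j + 1 - 1) / 2 = j + j * (j - 1) / 2 := by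
      have := pent_half j
      simpa [Nat.succ_sub_one, Nat.mul_comm] using this
    rw [h5]; ring
  have e4 : j * (n + 1) + j * (j - 1) / 2 = j * (j - 1) / 2 + (j * n + j) := by ring
  rw [e1, e2, e3, e4]
  simp only [Nat.succ_eq_add_one, pow_add]
  ring

/-- The full Shanks sum. -/
private noncomputable def GG (n : ℕ) : PowerSeries ℤ := ∑ j ∈ range (n + 1), gg n j

private lemma GG_succ (n : ℕ) :
    GG (n + 1) = GG n + (-1) ^ (n + 1) *
      ((X : PowerSeries ℤ) ^ ((n + 1) * (3 * (n + 1) + 1) / 2)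
        + X ^ ((n + 1) * (3 * (n + 1) - 1) / 2)) := by
  have hsum : ∑ j ∈ range (n + 1), (gg (n + 1) j - gg n j) = vv n (n + 1) - vv n 0 :=
    (Finset.sum_congr rfl fun j hj =>
      key n j (Nat.lt_succ_iff.1 (Finset.mem_range.1 hj))).trans
      (Finset.sum_range_sub (vv n) (n + 1))
  have hGG : GG (n + 1) = (∑ j ∈ range (n + 1), gg (n + 1) j) + gg (n + 1) (n + 1) := by
    rw [GG, Finset.sum_range_succ]
  have hsplit : (∑ j ∈ range (n + 1), gg (n + 1) j)
      = GG n + (vv n (n + 1) - vv n 0) := by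
    rw [← hsum, GG, Finset.sum_sub_distrib]; ring
  rw [hGG, hsplit, vv_zero]
  have hg : gg (n + 1) (n + 1) = (-1) ^ (n + 1) *
      (X : PowerSeries ℤ) ^ ((n + 1) * (3 * (n + 1) + 1) / 2) := by
    unfold gg
    rw [show Icc (n + 1 + 1) (n + 1) = ∅ by rw [Finset.Icc_eq_empty_iff]; omega,
      Finset.prod_empty, pent1 (n + 1), pent_half (n + 1)]
    ring
  have hv : vv n (n + 1) = (-1) ^ (n + 1) *
      (X : PowerSeries ℤ) ^ ((n + 1) * (3 * (n + 1) - 1) / 2) := by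
    unfold vv
    rw [show Icc (n + 1) n = ∅ by rw [Finset.Icc_eq_empty_iff]; omega,
      Finset.prod_empty, pent2 (n + 1)]
    ring
  rw [hg, hv]
  ring

private lemma GG_eq (n : ℕ) :
    GG n = 1 + ∑ j ∈ Icc 1 n, (-1 : PowerSeries ℤ) ^ j *
      ((X : PowerSeries ℤ) ^ (j * (3 * j + 1) / 2) + X ^ (j * (3 * j - 1) / 2)) := by
  induction n with
  | zero => simp [GG, gg]
  | succ n ih =>
    rw [GG_succ, ih, Finset.sum_Icc_succ_top (by omega : 1 ≤ n + 1)]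
    ring

private lemma coeff_gg_zero (n m j : ℕ) (hj : 1 ≤ j) (hm : m ≤ n) :
    (PowerSeries.coeff m) (gg (n + 1) j) = 0 := by
  unfold gg
  rw [PowerSeries.coeff_mul_X_pow', if_neg (by
      intro hle
      have h1 : j * (n + 1) ≤ j * (j + 1) / 2 + j * (n + 1) := Nat.le_add_left _ _
      have h2 : n + 1 ≤ j * (n + 1) := Nat.le_mul_of_pos_left _ hj
      omega)]

/-- Euler's pentagonal number identity, stated coefficient-wise: the coefficient of qⁿ in
∏_{j=1}^∞ (1 - q^j) (captured by the partial product over j ≤ n+1, which has the same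
coefficient of qⁿ) equals the coefficient of qⁿ in
1 + Σ_{j≥1} (-1)^j (q^{j(3j+1)/2} + q^{j(3j-1)/2}). -/
theorem stmt_8 (n : ℕ) :
    (PowerSeries.coeff n) (∏ j ∈ Finset.range (n + 1), (1 - (X : PowerSeries ℤ) ^ (j + 1))) =
      (if n = 0 then 1 else 0) +
        ∑ j ∈ Finset.Icc 1 n, (-1 : ℤ) ^ j *
          ((if j * (3 * j + 1) / 2 = n then 1 else 0) +
            (if j * (3 * j - 1) / 2 = n then 1 else 0)) := by
  have hprod : (∏ j ∈ Finset.range (n + 1), (1 - (X : PowerSeries ℤ) ^ (j + 1)))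
      = gg (n + 1) 0 := by
    unfold gg
    rw [pow_zero, one_mul, Nat.zero_mul, Nat.zero_mul, Nat.zero_div, Nat.zero_add, pow_zero,
      mul_one, ← Finset.Ico_add_one_right_eq_Icc, Finset.prod_Ico_eq_prod_range]
    refine Finset.prod_congr (by simp) fun i _ => by rw [Nat.add_comm]
  have hGGdecomp : GG (n + 1) = gg (n + 1) 0 + ∑ j ∈ Icc 1 (n + 1), gg (n + 1) j := by
    rw [GG, Finset.range_eq_Ico, Finset.sum_eq_sum_Ico_succ_bot (by omega : 0 < n + 2),
      ← Finset.Ico_add_one_right_eq_Icc]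
    rfl
  have hcoeff : (PowerSeries.coeff n) (gg (n + 1) 0)
      = (PowerSeries.coeff n) (GG (n + 1)) := by
    rw [hGGdecomp, map_add, map_sum]
    rw [Finset.sum_eq_zero fun j hj =>
      coeff_gg_zero n n j (Finset.mem_Icc.1 hj).1 le_rfl]
    ring
  rw [hprod, hcoeff, GG_eq, map_add, map_sum, PowerSeries.coeff_one]
  congr 1
  rw [Finset.sum_Icc_succ_top (by omega : 1 ≤ n + 1)]
  have hlast : (PowerSeries.coeff n) ((-1 : PowerSeries ℤ) ^ (n + 1) *
      ((X : PowerSeries ℤ) ^ ((n + 1) * (3 * (n + 1) + 1) / 2)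
        + X ^ ((n + 1) * (3 * (n + 1) - 1) / 2))) = 0 := by
    have hb1 : n < (n + 1) * (3 * (n + 1) + 1) / 2 := by
      rw [pent1]
      have : n + 1 ≤ (n + 1) * (n + 1) := Nat.le_mul_of_pos_left _ (by omega)
      omega
    have hb2 : n < (n + 1) * (3 * (n + 1) - 1) / 2 := by
      rw [pent2]
      have : n + 1 ≤ (n + 1) * (n + 1) := Nat.le_mul_of_pos_left _ (by omega)
      omega
    have hC : ((-1 : PowerSeries ℤ) ^ (n + 1)) = PowerSeries.C ((-1) ^ (n + 1)) := by
      simp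
    rw [hC, PowerSeries.coeff_C_mul, map_add, PowerSeries.coeff_X_pow,
      PowerSeries.coeff_X_pow, if_neg (by omega), if_neg (by omega)]
    ring
  rw [hlast, add_zero]
  refine Finset.sum_congr rfl fun j hj => ?_
  have hC : ((-1 : PowerSeries ℤ) ^ j) = PowerSeries.C ((-1) ^ j) := by simp
  rw [hC, PowerSeries.coeff_C_mul, map_add, PowerSeries.coeff_X_pow,
    PowerSeries.coeff_X_pow]
  congr 2 <;> [skip; skip] <;> simp [eq_comm]
end

section
/- Let M = ⊕_{i} M_i be a graded vector space with operators v_n (n ∈ ℤ) for each v in an auxiliary space V, an operator L(-1), and suppose: (a) for each u ∈ M and v ∈ V, v_n u = 0 for n sufficiently large; (b) [L(-1), v_{k+1}] = -(k+1)v_k for all k; (c) any u with v_k u = 0 for all v ∈ V, k ≥ 0 lies in M₀. Then for u ∈ M_j with j ≠ 0, if L(-1)u = 0 and there exists v ∈ V with v_k u ≠ 0 for some k, then j = 0; i.e., L(-1): M_j → M_{j+1} is injective for j ≠ 0 provided every nonzero vector is non-vacuum-like outside M₀. -/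
/-!
If `L(-1) u = 0`, the commutator formula applied to `u` gives
`L(-1) (v_{k+1} u) = -(k+1) v_k u`, so `v_{k+1} u = 0` forces `v_k u = 0` for `k ≥ 0`.
Since `v_n u = 0` for large `n`, downward induction makes `u` vacuum-like, hence `u ∈ M₀`;
for `j ≠ 0` the grading then forces `u = 0`, contradicting `v_k u ≠ 0`.
-/

theorem Int.forall_ge_of_eventually_of_succ {P : ℤ → Prop} {m N : ℤ}
    (hN : ∀ n, N ≤ n → P n) (hsucc : ∀ n, m ≤ n → P (n + 1) → P n) :
    ∀ n, m ≤ n → P n := by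
  intro n hmn
  refine Int.leInductionDown (m := max N n) (motive := fun k _ => n ≤ k → P k)
    (fun _ => hN _ (le_max_left _ _)) (fun k _ ih hnk => ?_) n (le_max_right _ _) le_rfl
  exact hsucc _ (by omega) (by simpa using ih (by omega))

section Commutator

variable {K M : Type*} [Field K] [AddCommGroup M] [Module K M]

theorem Module.End.apply_eq_zero_of_commutator_eq_smul {L a b : Module.End K M} {c : K}
    (hcomm : L ∘ₗ a - a ∘ₗ L = -(c • b)) (hc : c ≠ 0) {u : M} (hLu : L u = 0) (hau : a u = 0) :
    b u = 0 := by
  have h := LinearMap.congr_fun hcomm u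
  simp only [LinearMap.sub_apply, LinearMap.comp_apply, LinearMap.neg_apply,
    LinearMap.smul_apply, hLu, hau, map_zero, sub_zero, zero_eq_neg] at h
  exact (smul_eq_zero.mp h).resolve_left hc

end Commutator

theorem modes_nonneg_apply_eq_zero_of_apply_eq_zero {M V : Type*} [AddCommGroup M] [Module ℝ M]
    {A : V → ℤ → Module.End ℝ M} {L : Module.End ℝ M}
    (htrunc : ∀ (u : M) (v : V), ∃ N : ℤ, ∀ n : ℤ, N ≤ n → A v n u = 0)
    (hcomm : ∀ (v : V) (k : ℤ), L ∘ₗ A v (k + 1) - A v (k + 1) ∘ₗ L = -(((k : ℝ) + 1) • A v k))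
    {u : M} (hLu : L u = 0) (v : V) : ∀ k : ℤ, 0 ≤ k → A v k u = 0 := by
  obtain ⟨N, hN⟩ := htrunc u v
  refine Int.forall_ge_of_eventually_of_succ hN fun k hk hsucc => ?_
  refine Module.End.apply_eq_zero_of_commutator_eq_smul (hcomm v k) ?_ hLu hsucc
  exact_mod_cast (by omega : k + 1 ≠ 0)

/-- Li's vacuum-like vector argument: in a graded space M with mode operators v_n
satisfying (a) truncation, (b) the commutator formula [L(-1), v_{k+1}] = -(k+1)v_k, and
(c) vacuum-like vectors lie in M₀, any u ∈ M_j killed by L(-1) but not killed by some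
mode must have j = 0; i.e. L(-1) is injective on M_j for j ≠ 0. -/
theorem stmt_11 (M : Type*) [AddCommGroup M] [Module ℝ M]
    (Mgr : ℤ → Submodule ℝ M)
    (hdisj : ∀ i i' : ℤ, i ≠ i' → ∀ x : M, x ∈ Mgr i → x ∈ Mgr i' → x = 0)
    (Vaux : Type*) (A : Vaux → ℤ → Module.End ℝ M) (Lm1 : Module.End ℝ M)
    (htrunc : ∀ (u : M) (v : Vaux), ∃ N : ℤ, ∀ n : ℤ, N ≤ n → A v n u = 0)
    (hcomm : ∀ (v : Vaux) (k : ℤ),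
      Lm1 ∘ₗ A v (k + 1) - A v (k + 1) ∘ₗ Lm1 = -(((k : ℝ) + 1) • A v k))
    (hvac : ∀ u : M, (∀ (v : Vaux) (k : ℤ), 0 ≤ k → A v k u = 0) → u ∈ Mgr 0) :
    ∀ (j : ℤ) (u : M), u ∈ Mgr j → Lm1 u = 0 →
      (∃ (v : Vaux) (k : ℤ), A v k u ≠ 0) → j = 0 := by
  rintro j u hu hLu ⟨v, k, hvku⟩
  have hu0 : u ∈ Mgr 0 :=
    hvac u (modes_nonneg_apply_eq_zero_of_apply_eq_zero htrunc hcomm hLu)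
  by_contra hj
  exact hvku (by rw [hdisj j 0 hj u hu hu0, map_zero])
end
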